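/- arXiv:math-ph/0603056 — 8 statements merged into one kernel-verified Lean document; each statement's English description precedes it below -/
import Mathlib

section
/- Let A be an n×n matrix over a commutative ring and let Δ be its matrix of cofactors (so Δ_{ij} is the (i,j) cofactor of A). For any 2×2 minor M₂' of Δ obtained by selecting rows i₁ < i₂ and columns k₁ < k₂, one has M₂' = det(A) · (−1)^{i₁+i₂+k₁+k₂} · M₂^c, where M₂^c is the complementary minor of A obtained by deleting rows i₁, i₂ and columns k₁, k₂. -/
/-!
If `M * N = d • 1`, replacing the second block column of `N` by that of the identity gives a
matrix `P` for which `M * P` is block upper triangular with diagonal blocks `d • 1` and `M₂₂`, so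
`det M * det N₁₁ = d ^ r * det M₂₂`. Take for `M` the matrix `A` with rows `i₁, i₂` and columns
`k₁, k₂` moved to the front and for `N` the matching rearrangement of `adj A`: then `det M` is
`det A` times the sign of the rearrangement, and the extra factor `det A` cancels once the identity
is proved for the generic matrix over `ℤ[X_ij]`, whose determinant is not a zero divisor.
-/

open Equiv

namespace Matrix

variable {m κ ι R : Type*} [Fintype m] [DecidableEq m] [Fintype κ] [DecidableEq κ]
  [Fintype ι] [DecidableEq ι] [CommRing R]

theorem det_mul_det_toBlocks₁₁_of_mul_eq_smul_one {M N : Matrix (κ ⊕ ι) (κ ⊕ ι) R} {d : R}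
    (hMN : M * N = d • 1) :
    M.det * N.toBlocks₁₁.det = d ^ Fintype.card κ * M.toBlocks₂₂.det := by
  rw [← fromBlocks_toBlocks M, ← fromBlocks_toBlocks N, fromBlocks_multiply, ← fromBlocks_one,
    fromBlocks_smul, fromBlocks_inj] at hMN
  obtain ⟨h₁₁, -, h₂₁, -⟩ := hMN
  have hMP : M * fromBlocks N.toBlocks₁₁ 0 N.toBlocks₂₁ 1 =
      fromBlocks (d • 1) M.toBlocks₁₂ 0 M.toBlocks₂₂ := by
    rw [← fromBlocks_toBlocks M, fromBlocks_multiply, h₁₁, h₂₁]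
    simp
  have := congrArg det hMP
  rwa [det_mul, det_fromBlocks_zero₁₂, det_one, mul_one, det_fromBlocks_zero₂₁, det_smul,
    det_one, mul_one] at this

theorem det_submatrix_equiv (A : Matrix m m R) (e f : ι ≃ m) :
    (A.submatrix e f).det = Perm.sign (f.symm.trans e) * A.det := by
  simpa using det_reindex e.symm f.symm A

theorem sign_mul_det_mul_det_submatrix_adjugate (A : Matrix m m R) (e f : κ ⊕ ι ≃ m) :
    Perm.sign (f.symm.trans e) * A.det * (A.adjugate.submatrix (f ∘ Sum.inl) (e ∘ Sum.inl)).det =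
      A.det ^ Fintype.card κ * (A.submatrix (e ∘ Sum.inr) (f ∘ Sum.inr)).det := by
  rw [← det_submatrix_equiv A e f]
  refine det_mul_det_toBlocks₁₁_of_mul_eq_smul_one
    (M := A.submatrix e f) (N := A.adjugate.submatrix f e) ?_
  rw [submatrix_mul_equiv, mul_adjugate]
  ext i j
  simp [one_apply]

theorem det_submatrix_adjugate [Nonempty κ] (A : Matrix m m R) (e f : κ ⊕ ι ≃ m) :
    (A.adjugate.submatrix (f ∘ Sum.inl) (e ∘ Sum.inl)).det =
      Perm.sign (f.symm.trans e) * A.det ^ (Fintype.card κ - 1) *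
        (A.submatrix (e ∘ Sum.inr) (f ∘ Sum.inr)).det := by
  let X := mvPolynomialX m m ℤ
  suffices (X.adjugate.submatrix (f ∘ Sum.inl) (e ∘ Sum.inl)).det =
      Perm.sign (f.symm.trans e) * X.det ^ (Fintype.card κ - 1) *
        (X.submatrix (e ∘ Sum.inr) (f ∘ Sum.inr)).det by
    rw [← mvPolynomialX_mapMatrix_aeval ℤ A, ← AlgHom.map_adjugate, AlgHom.mapMatrix_apply,
      AlgHom.mapMatrix_apply, submatrix_map, submatrix_map, ← AlgHom.mapMatrix_apply,
      ← AlgHom.mapMatrix_apply, ← AlgHom.mapMatrix_apply, ← AlgHom.map_det, ← AlgHom.map_det,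
      ← AlgHom.map_det, this]
    simp [X]
  have hJ := sign_mul_det_mul_det_submatrix_adjugate X e f
  rw [← Nat.sub_add_cancel (Fintype.card_pos (α := κ)), pow_succ'] at hJ
  have hsign : (Perm.sign (f.symm.trans e) : MvPolynomial (m × m) ℤ) ^ 2 = 1 := by
    norm_cast
    simp
  apply mul_left_cancel₀ (det_mvPolynomialX_ne_zero m ℤ)
  linear_combination (Perm.sign (f.symm.trans e) : MvPolynomial (m × m) ℤ) * hJ
    - X.det * (X.adjugate.submatrix (f ∘ Sum.inl) (e ∘ Sum.inl)).det * hsign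

end Matrix

namespace Fin

variable {n : ℕ}

def pairFrontPerm (i : Fin (n + 2)) (i' : Fin (n + 1)) : Perm (Fin (n + 2)) :=
  (cycleRange i).symm * Perm.decomposeFin.symm (0, (cycleRange i').symm)

theorem sign_pairFrontPerm (i : Fin (n + 2)) (i' : Fin (n + 1)) :
    Perm.sign (pairFrontPerm i i') = (-1) ^ ((i : ℕ) + i') := by
  simp [pairFrontPerm, ← Perm.inv_def, sign_cycleRange, pow_add]

def pairSumEquiv (i : Fin (n + 2)) (i' : Fin (n + 1)) : Fin 2 ⊕ Fin n ≃ Fin (n + 2) :=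
  (finSumFinEquiv.trans (finCongr (Nat.add_comm 2 n))).trans (pairFrontPerm i i')

@[simp]
theorem pairSumEquiv_inl_zero (i : Fin (n + 2)) (i' : Fin (n + 1)) :
    pairSumEquiv i i' (Sum.inl 0) = i := by
  change pairFrontPerm i i' 0 = i
  simp [pairFrontPerm]

@[simp]
theorem pairSumEquiv_inl_one (i : Fin (n + 2)) (i' : Fin (n + 1)) :
    pairSumEquiv i i' (Sum.inl 1) = i.succAbove i' := by
  change pairFrontPerm i i' 1 = i.succAbove i'
  simp [pairFrontPerm]

@[simp]
theorem pairSumEquiv_inr (i : Fin (n + 2)) (i' : Fin (n + 1)) (j : Fin n) :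
    pairSumEquiv i i' (Sum.inr j) = i.succAbove (i'.succAbove j) := by
  have hj : finCongr (Nat.add_comm 2 n) (finSumFinEquiv (Sum.inr j)) = j.succ.succ :=
    Fin.ext (Nat.add_comm 2 j)
  rw [pairSumEquiv, Equiv.trans_apply, Equiv.trans_apply, hj]
  simp [pairFrontPerm]

theorem sign_pairSumEquiv_symm_trans (i k : Fin (n + 2)) (i' k' : Fin (n + 1)) :
    Perm.sign ((pairSumEquiv k k').symm.trans (pairSumEquiv i i')) =
      (-1) ^ ((i : ℕ) + i' + k + k') := by
  have h : (pairSumEquiv k k').symm.trans (pairSumEquiv i i') =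
      pairFrontPerm i i' * (pairFrontPerm k k')⁻¹ := by
    ext x
    simp [pairSumEquiv, Perm.mul_def, Perm.inv_def]
  rw [h, Perm.sign_mul, Perm.sign_inv, sign_pairFrontPerm, sign_pairFrontPerm, ← pow_add]
  ring_nf

theorem range_succAbove_comp_succAbove (i : Fin (n + 2)) (i' : Fin (n + 1)) :
    Set.range (i.succAbove ∘ i'.succAbove) = {i, i.succAbove i'}ᶜ := by
  rw [Set.range_comp, range_succAbove,
    Set.image_compl_eq_range_sdiff_image succAbove_right_injective, Set.image_singleton,
    range_succAbove, Set.insert_eq, Set.compl_union, Set.sdiff_eq]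

theorem eq_succAbove_comp_succAbove_of_range {f : Fin n → Fin (n + 2)} (hf : StrictMono f)
    {i : Fin (n + 2)} {i' : Fin (n + 1)} (hrange : Set.range f = {i, i.succAbove i'}ᶜ) :
    f = i.succAbove ∘ i'.succAbove :=
  (hf.range_inj ((strictMono_succAbove i).comp (strictMono_succAbove i'))).1
    (by rw [hrange, range_succAbove_comp_succAbove])

end Fin

namespace Matrix

theorem adjugate_mul_adjugate_sub_succAbove {R : Type*} [CommRing R] {n : ℕ}
    (A : Matrix (Fin (n + 2)) (Fin (n + 2)) R) (i k : Fin (n + 2)) (i' k' : Fin (n + 1)) :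
    A.adjugate k i * A.adjugate (k.succAbove k') (i.succAbove i') -
        A.adjugate k (i.succAbove i') * A.adjugate (k.succAbove k') i =
      (-1) ^ ((i : ℕ) + i' + k + k') * A.det *
        (A.submatrix (i.succAbove ∘ i'.succAbove) (k.succAbove ∘ k'.succAbove)).det := by
  have h := det_submatrix_adjugate A (Fin.pairSumEquiv i i') (Fin.pairSumEquiv k k')
  rw [det_fin_two, Fin.sign_pairSumEquiv_symm_trans] at h
  simpa [Function.comp_def] using h

end Matrix

/-- Jacobi's theorem for 2×2 minors of the cofactor matrix: if `Δ` is the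
matrix of cofactors of `A`, then any 2×2 minor of `Δ` with rows `i₁ < i₂`
and columns `k₁ < k₂` equals `det A` times the signed complementary minor
of `A` obtained by deleting rows `i₁, i₂` and columns `k₁, k₂`. -/
theorem jacobi_minor_cofactor {R : Type*} [CommRing R] (n : ℕ)
    (A : Matrix (Fin (n + 2)) (Fin (n + 2)) R)
    (Δ : Matrix (Fin (n + 2)) (Fin (n + 2)) R)
    (hΔ : ∀ i j, Δ i j = (-1 : R) ^ ((i : ℕ) + (j : ℕ)) *
      (A.submatrix i.succAbove j.succAbove).det)
    (i₁ i₂ k₁ k₂ : Fin (n + 2)) (hi : i₁ < i₂) (hk : k₁ < k₂)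
    (er ec : Fin n → Fin (n + 2))
    (her : StrictMono er) (hec : StrictMono ec)
    (hranger : Set.range er = ({i₁, i₂} : Set (Fin (n + 2)))ᶜ)
    (hrangec : Set.range ec = ({k₁, k₂} : Set (Fin (n + 2)))ᶜ) :
    Δ i₁ k₁ * Δ i₂ k₂ - Δ i₁ k₂ * Δ i₂ k₁ =
      A.det * (-1 : R) ^ ((i₁ : ℕ) + (i₂ : ℕ) + (k₁ : ℕ) + (k₂ : ℕ)) *
        (A.submatrix er ec).det := by
  have hΔadj : ∀ i k, Δ i k = A.adjugate k i := fun i k => by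
    rw [hΔ, Matrix.adjugate_fin_succ_eq_det_submatrix, add_comm]
  obtain ⟨i', rfl, hi'⟩ : ∃ i', i₁.succAbove i' = i₂ ∧ (i₂ : ℕ) = i' + 1 :=
    ⟨_, Fin.succAbove_pred_of_lt _ _ hi,
      congrArg Fin.val (Fin.succ_pred i₂ (Fin.ne_zero_of_lt hi)).symm⟩
  obtain ⟨k', rfl, hk'⟩ : ∃ k', k₁.succAbove k' = k₂ ∧ (k₂ : ℕ) = k' + 1 :=
    ⟨_, Fin.succAbove_pred_of_lt _ _ hk,
      congrArg Fin.val (Fin.succ_pred k₂ (Fin.ne_zero_of_lt hk)).symm⟩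
  rw [hΔadj, hΔadj, hΔadj, hΔadj, Fin.eq_succAbove_comp_succAbove_of_range her hranger,
    Fin.eq_succAbove_comp_succAbove_of_range hec hrangec, hi', hk']
  linear_combination Matrix.adjugate_mul_adjugate_sub_succAbove A i₁ k₁ i' k'
end

section
/- Let ψ₁,…,ψₙ,ψₛ : ℝ → ℝ be smooth. Write Wₙ for the Wronskian of ψ₁,…,ψₙ, W_{n−1} for the Wronskian of ψ₁,…,ψ_{n−1}, W_{n,s} for the Wronskian of ψ₁,…,ψₙ,ψₛ, and W_{n−1,s} for the Wronskian of ψ₁,…,ψ_{n−1},ψₛ. Then W(Wₙ, W_{n−1,s}) = Wₙ · (W_{n−1,s})' − W_{n−1,s} · (Wₙ)' = W_{n,s} · W_{n−1}. -/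
/-- The Wronskian of a finite family of functions. -/
noncomputable def wronskian {k : ℕ} (f : Fin k → ℝ → ℝ) : ℝ → ℝ :=
  fun x => (Matrix.of fun i j : Fin k => iteratedDeriv i (f j) x).det


open Matrix Topology Filter Polynomial

theorem hasDerivAt_det_col {k : ℕ} {M : ℝ → Matrix (Fin k) (Fin k) ℝ}
    {M' : Matrix (Fin k) (Fin k) ℝ} {x : ℝ}
    (h : ∀ i j, HasDerivAt (fun t => M t i j) (M' i j) x) :
    HasDerivAt (fun t => (M t).det)
      (∑ j, ((M x).updateCol j fun r => M' r j).det) x := by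
  simp only [Matrix.det_apply']
  have H := HasDerivAt.fun_sum (u := (Finset.univ : Finset (Equiv.Perm (Fin k))))
    (fun σ _ => ((HasDerivAt.fun_finsetProd (u := Finset.univ)
      (fun i _ => h (σ i) i)).const_mul ((Equiv.Perm.sign σ : ℤ) : ℝ)))
  refine H.congr_deriv (Eq.symm ?_)
  rw [Finset.sum_comm]
  refine Finset.sum_congr rfl fun σ _ => ?_
  rw [Finset.mul_sum]
  refine Finset.sum_congr rfl fun j _ => ?_
  rw [← Finset.mul_prod_erase Finset.univ _ (Finset.mem_univ j)]
  simp only [Matrix.updateCol_apply, smul_eq_mul, if_pos, if_true]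
  rw [Finset.prod_congr rfl (fun i hi => if_neg (Finset.ne_of_mem_erase hi))]
  ring

theorem hasDerivAt_det_row {k : ℕ} {M : ℝ → Matrix (Fin k) (Fin k) ℝ}
    {M' : Matrix (Fin k) (Fin k) ℝ} {x : ℝ}
    (h : ∀ i j, HasDerivAt (fun t => M t i j) (M' i j) x) :
    HasDerivAt (fun t => (M t).det)
      (∑ i, ((M x).updateRow i (M' i)).det) x := by
  have H := hasDerivAt_det_col (M := fun t => (M t)ᵀ) (M' := M'ᵀ) (x := x)
    (fun i j => h j i)
  simp only [Matrix.det_transpose] at H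
  convert H using 1
  refine Finset.sum_congr rfl fun i _ => ?_
  rw [show (fun r => M'ᵀ r i) = M' i from rfl, Matrix.updateCol_transpose,
    Matrix.det_transpose]

theorem wronskian_hasDerivAt {k : ℕ} (f : Fin (k + 1) → ℝ → ℝ)
    (hf : ∀ j, ContDiff ℝ (⊤ : ℕ∞) (f j)) (x : ℝ) :
    HasDerivAt (wronskian f)
      ((Matrix.of fun i j : Fin (k + 1) =>
        iteratedDeriv (if i = Fin.last k then k + 1 else (i : ℕ)) (f j) x).det) x := by
  have hent : ∀ (i : ℕ) (j : Fin (k+1)), HasDerivAt (fun t => iteratedDeriv i (f j) t)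
      (iteratedDeriv (i + 1) (f j) x) x := by
    intro i j
    have hd : Differentiable ℝ (iteratedDeriv i (f j)) :=
      (hf j).differentiable_iteratedDeriv i (by exact_mod_cast ENat.coe_lt_top i)
    have := (hd x).hasDerivAt
    rwa [← iteratedDeriv_succ] at this
  have H := hasDerivAt_det_row
    (M := fun t => Matrix.of fun i j : Fin (k+1) => iteratedDeriv i (f j) t)
    (M' := Matrix.of fun i j : Fin (k+1) => iteratedDeriv ((i : ℕ) + 1) (f j) x) (x := x)
    (fun i j => hent i j)
  convert H using 1
  · rfl
  rw [Finset.sum_eq_single_of_mem (Fin.last k) (Finset.mem_univ _)]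
  · congr 1
    ext i j
    by_cases hi : i = Fin.last k
    · subst hi
      simp [Matrix.updateRow_apply, Fin.val_last]
    · simp [Matrix.updateRow_apply, hi]
  · intro i _ hi
    have hik : (i : ℕ) < k := by
      rcases lt_or_eq_of_le (Nat.lt_succ_iff.mp i.isLt) with h | h
      · exact h
      · exact absurd (Fin.ext h) hi
    refine Matrix.det_zero_of_row_eq (i := i) (j := ⟨(i : ℕ) + 1, by omega⟩)
      (by simp [Fin.ext_iff]) ?_
    funext j
    simp [Matrix.updateRow_apply, Fin.ext_iff]

noncomputable def djMinor {k : ℕ} (P : Matrix (Fin k) (Fin k) ℝ) (Q : Matrix (Fin k) (Fin 2) ℝ)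
    (R : Matrix (Fin 2) (Fin k) ℝ) (S : Matrix (Fin 2) (Fin 2) ℝ) (a b : Fin 2) : ℝ :=
  Matrix.det (Matrix.fromBlocks P (Q.submatrix id fun _ : Fin 1 => b)
    (R.submatrix (fun _ : Fin 1 => a) id) (S.submatrix (fun _ : Fin 1 => a) fun _ => b))

theorem dj_blocks_inv {k : ℕ} (P : Matrix (Fin k) (Fin k) ℝ) (Q : Matrix (Fin k) (Fin 2) ℝ)
    (R : Matrix (Fin 2) (Fin k) ℝ) (S : Matrix (Fin 2) (Fin 2) ℝ) [Invertible P] :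
    djMinor P Q R S 0 0 * djMinor P Q R S 1 1 - djMinor P Q R S 0 1 * djMinor P Q R S 1 0 =
      (Matrix.fromBlocks P Q R S).det * P.det := by
  have hd : ∀ a b : Fin 2, djMinor P Q R S a b = P.det * (S - R * ⅟P * Q) a b := by
    intro a b
    rw [djMinor, Matrix.det_fromBlocks₁₁]
    congr 1
    rw [Matrix.det_fin_one]
    simp [Matrix.sub_apply, Matrix.mul_apply, Matrix.submatrix_apply,
      Matrix.invOf_eq_nonsing_inv]
  rw [Matrix.det_fromBlocks₁₁, hd, hd, hd, hd, Matrix.det_fin_two]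
  ring

theorem dense_isUnit_det (k : ℕ) :
    Dense {P : Matrix (Fin k) (Fin k) ℝ | IsUnit P.det} := by
  intro A
  set p : Polynomial ℝ := Matrix.charpoly (-A) with hp
  have heval : ∀ t : ℝ, p.eval t = (A + t • 1).det := by
    intro t
    rw [hp, Matrix.charpoly, ← coe_evalRingHom, RingHom.map_det]
    congr 1
    ext i j
    rcases eq_or_ne i j with h | h
    · subst h
      simp [Matrix.charmatrix_apply_eq, Matrix.one_apply, add_comm]
    · simp [Matrix.charmatrix_apply_ne _ _ _ h, Matrix.one_apply_ne h]
  have hfin : {t : ℝ | p.eval t = 0}.Finite :=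
    Polynomial.finite_setOf_isRoot (Matrix.charpoly_monic _).ne_zero
  have hK : ({t : ℝ | p.eval t = 0} \ {0})ᶜ ∈ 𝓝 (0 : ℝ) :=
    ((hfin.subset Set.diff_subset).isClosed.isOpen_compl).mem_nhds (by simp)
  have hev : ∀ᶠ t in 𝓝[≠] (0 : ℝ), A + t • 1 ∈ {P : Matrix (Fin k) (Fin k) ℝ | IsUnit P.det} := by
    filter_upwards [nhdsWithin_le_nhds hK, self_mem_nhdsWithin] with t ht ht0
    have : p.eval t ≠ 0 := by
      intro h0
      exact ht ⟨h0, ht0⟩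
    rw [heval] at this
    simpa using isUnit_iff_ne_zero.mpr this
  have htend : Filter.Tendsto (fun t : ℝ => A + t • (1 : Matrix (Fin k) (Fin k) ℝ))
      (𝓝[≠] (0 : ℝ)) (𝓝 A) := by
    have hc : Continuous fun t : ℝ => A + t • (1 : Matrix (Fin k) (Fin k) ℝ) :=
      continuous_const.add (continuous_id.smul continuous_const)
    have h0 : Filter.Tendsto (fun t : ℝ => A + t • (1 : Matrix (Fin k) (Fin k) ℝ))
        (𝓝 (0 : ℝ)) (𝓝 A) := by simpa using hc.tendsto 0
    exact h0.mono_left nhdsWithin_le_nhds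
  exact mem_closure_of_tendsto htend hev

theorem dj_blocks {k : ℕ} (P : Matrix (Fin k) (Fin k) ℝ) (Q : Matrix (Fin k) (Fin 2) ℝ)
    (R : Matrix (Fin 2) (Fin k) ℝ) (S : Matrix (Fin 2) (Fin 2) ℝ) :
    djMinor P Q R S 0 0 * djMinor P Q R S 1 1 - djMinor P Q R S 0 1 * djMinor P Q R S 1 0 =
      (Matrix.fromBlocks P Q R S).det * P.det := by
  have hid : Continuous fun P : Matrix (Fin k) (Fin k) ℝ => P := continuous_id
  have hminor : ∀ a b : Fin 2,
      Continuous fun P : Matrix (Fin k) (Fin k) ℝ => djMinor P Q R S a b := by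
    intro a b
    exact (Continuous.matrix_fromBlocks hid continuous_const continuous_const
      continuous_const).matrix_det
  have hL : Continuous fun P : Matrix (Fin k) (Fin k) ℝ =>
      djMinor P Q R S 0 0 * djMinor P Q R S 1 1 - djMinor P Q R S 0 1 * djMinor P Q R S 1 0 :=
    ((hminor 0 0).mul (hminor 1 1)).sub ((hminor 0 1).mul (hminor 1 0))
  have hR : Continuous fun P : Matrix (Fin k) (Fin k) ℝ =>
      (Matrix.fromBlocks P Q R S).det * P.det :=
    ((Continuous.matrix_fromBlocks hid continuous_const continuous_const
      continuous_const).matrix_det).mul hid.matrix_det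
  have heq := Continuous.ext_on (dense_isUnit_det k) hL hR (fun P hP => by
    haveI := Matrix.invertibleOfIsUnitDet _ hP
    exact dj_blocks_inv P Q R S)
  exact congrFun heq P

def delPen {k : ℕ} (i : Fin (k + 1)) : Fin (k + 2) :=
  ⟨if (i : ℕ) = k then k + 1 else i, by split <;> omega⟩

@[simp] lemma delPen_val {k : ℕ} (i : Fin (k + 1)) :
    (delPen i : ℕ) = if (i : ℕ) = k then k + 1 else i := rfl

theorem dj {k : ℕ} (A : Matrix (Fin (k + 2)) (Fin (k + 2)) ℝ) :
    (A.submatrix Fin.castSucc Fin.castSucc).det * (A.submatrix delPen delPen).det -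
      (A.submatrix Fin.castSucc delPen).det * (A.submatrix delPen Fin.castSucc).det =
    A.det * (A.submatrix (fun i : Fin k => i.castSucc.castSucc)
      (fun j : Fin k => j.castSucc.castSucc)).det := by
  set rmap : Fin 2 → Fin (k + 1) → Fin (k + 2) := ![Fin.castSucc, delPen] with hrmap
  set emb2 : Fin 2 → Fin (k + 2) := fun a => ⟨k + a, by omega⟩ with hemb2
  set P : Matrix (Fin k) (Fin k) ℝ := fun i j => A i.castSucc.castSucc j.castSucc.castSucc with hP
  set Q : Matrix (Fin k) (Fin 2) ℝ := fun i b => A i.castSucc.castSucc (emb2 b) with hQ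
  set R : Matrix (Fin 2) (Fin k) ℝ := fun a j => A (emb2 a) j.castSucc.castSucc with hR
  set S : Matrix (Fin 2) (Fin 2) ℝ := fun a b => A (emb2 a) (emb2 b) with hS
  have hmin : ∀ a b : Fin 2, djMinor P Q R S a b = (A.submatrix (rmap a) (rmap b)).det := by
    intro a b
    rw [djMinor, ← Matrix.det_submatrix_equiv_self (finSumFinEquiv (m := k) (n := 1))]
    congr 1
    ext x y
    rcases x with i | i <;> rcases y with j | j <;>
      fin_cases a <;> fin_cases b <;>
      · simp only [Matrix.fromBlocks_apply₁₁, Matrix.fromBlocks_apply₁₂,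
          Matrix.fromBlocks_apply₂₁, Matrix.fromBlocks_apply₂₂, Matrix.submatrix_apply,
          hP, hQ, hR, hS, id_eq, Matrix.fromBlocks, Matrix.of_apply, Sum.elim_inl, Sum.elim_inr,
            Matrix.submatrix]
        congr 1 <;>
        · apply Fin.ext
          simp [hrmap, hemb2, finSumFinEquiv, Fin.ext_iff]
          all_goals first
            | omega
            | (split_ifs <;> omega)
  have hbig : (Matrix.fromBlocks P Q R S).det = A.det := by
    rw [← Matrix.det_submatrix_equiv_self (finSumFinEquiv (m := k) (n := 2)) A]
    congr 1
    ext x y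
    rcases x with i | i <;> rcases y with j | j <;>
      · simp only [Matrix.fromBlocks_apply₁₁, Matrix.fromBlocks_apply₁₂,
          Matrix.fromBlocks_apply₂₁, Matrix.fromBlocks_apply₂₂, Matrix.submatrix_apply,
          hP, hQ, hR, hS]
        congr 1 <;>
        · apply Fin.ext
          simp [hemb2, finSumFinEquiv, Fin.ext_iff]
          all_goals first
            | omega
            | (split_ifs <;> omega)
  have H := dj_blocks P Q R S
  rw [hmin, hmin, hmin, hmin, hbig] at H
  have h0 : rmap 0 = Fin.castSucc := rfl
  have h1 : rmap 1 = delPen := rfl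
  rw [h0, h1] at H
  rw [H]
  rfl

/-- Crum's Wronskian lemma: `W(Wₙ, W_{n−1,s}) = Wₙ·W_{n−1,s}' − W_{n−1,s}·Wₙ' = W_{n,s}·W_{n−1}`. -/
theorem crum_wronskian_lemma (m : ℕ) (ψ : Fin (m + 1) → ℝ → ℝ) (ψs : ℝ → ℝ)
    (hψ : ∀ j, ContDiff ℝ (⊤ : ℕ∞) (ψ j)) (hψs : ContDiff ℝ (⊤ : ℕ∞) ψs) (x : ℝ) :
    wronskian ψ x * deriv (wronskian (Fin.snoc (fun i : Fin m => ψ i.castSucc) ψs)) x -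
      wronskian (Fin.snoc (fun i : Fin m => ψ i.castSucc) ψs) x * deriv (wronskian ψ) x =
    wronskian (Fin.snoc ψ ψs) x * wronskian (fun i : Fin m => ψ i.castSucc) x := by
  classical
  set A : Matrix (Fin (m + 2)) (Fin (m + 2)) ℝ :=
    Matrix.of fun i j => iteratedDeriv i ((Fin.snoc ψ ψs : Fin (m + 2) → ℝ → ℝ) j) x with hA
  have hdelPen_last : delPen (Fin.last m) = Fin.last (m + 1) := by
    apply Fin.ext; simp
  have hdelPen_cast : ∀ j' : Fin m, delPen j'.castSucc = j'.castSucc.castSucc := by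
    intro j'; apply Fin.ext; simp; omega
  have h1 : wronskian ψ x = (A.submatrix Fin.castSucc Fin.castSucc).det := by
    unfold _root_.wronskian; congr 1; ext i j
    simp [hA, Fin.snoc_castSucc]
  have h2 : wronskian (Fin.snoc (fun i : Fin m => ψ i.castSucc) ψs) x =
      (A.submatrix Fin.castSucc delPen).det := by
    unfold _root_.wronskian; congr 1; ext i j
    refine Fin.lastCases ?_ ?_ j
    · simp [hA, hdelPen_last, Fin.snoc_last]
    · intro j'
      simp [hA, hdelPen_cast j', Fin.snoc_castSucc]
  have hval : ∀ i : Fin (m + 1),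
      (if i = Fin.last m then m + 1 else (i : ℕ)) = (if (i : ℕ) = m then m + 1 else (i : ℕ)) := by
    intro i
    by_cases h : (i : ℕ) = m <;> simp [Fin.ext_iff, h]
  have h3 : deriv (wronskian ψ) x = (A.submatrix delPen Fin.castSucc).det := by
    rw [(wronskian_hasDerivAt ψ hψ x).deriv]
    congr 1; ext i j
    simp [hA, Fin.snoc_castSucc, hval i]
  have h4 : deriv (wronskian (Fin.snoc (fun i : Fin m => ψ i.castSucc) ψs)) x =
      (A.submatrix delPen delPen).det := by
    have hh : ∀ j, ContDiff ℝ (⊤ : ℕ∞) ((Fin.snoc (fun i : Fin m => ψ i.castSucc) ψs : Fin (m+1) → ℝ → ℝ) j) := by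
      intro j; refine Fin.lastCases ?_ ?_ j
      · simpa [Fin.snoc_last] using hψs
      · intro i; simpa [Fin.snoc_castSucc] using hψ i.castSucc
    rw [(wronskian_hasDerivAt _ hh x).deriv]
    congr 1; ext i j
    refine Fin.lastCases ?_ ?_ j
    · simp [hA, hdelPen_last, Fin.snoc_last, hval i]
    · intro j'
      simp [hA, hdelPen_cast j', Fin.snoc_castSucc, hval i]
  have h5 : wronskian (Fin.snoc ψ ψs) x = A.det := rfl
  have h6 : wronskian (fun i : Fin m => ψ i.castSucc) x =
      (A.submatrix (fun i : Fin m => i.castSucc.castSucc)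
        (fun j : Fin m => j.castSucc.castSucc)).det := by
    unfold _root_.wronskian; congr 1; ext i j
    simp [hA, Fin.snoc_castSucc]
  rw [h1, h2, h3, h4, h5, h6]
  exact dj A
end

section
/- Let ψ₁, ψ₂ be smooth, nowhere-vanishing solutions of −ψᵢ'' + u·ψᵢ = λᵢ·ψᵢ (i = 1,2), and suppose the first Darboux transform ψ^D[1]₂ = ψ₂' − (ψ₁'/ψ₁)ψ₂ is nowhere vanishing. Then the second-order Darboux-transformed potential u^D[2] = u^D[1] − 2·(d/dx)((ψ^D[1]₂)'/ψ^D[1]₂), where u^D[1] = u − 2·(d/dx)(ψ₁'/ψ₁), equals the second Crum transform u^C[2] = u − 2·(d²/dx²) ln W₂, where W₂ = ψ₁ψ₂' − ψ₂ψ₁' is the Wronskian of ψ₁ and ψ₂. -/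
open scoped ContDiff


/-- Second-order Darboux transform equals the second Crum transform:
`u − 2(ψ₁'/ψ₁)' − 2((ψᴰ[1]₂)'/ψᴰ[1]₂)' = u − 2(ln W₂)''` where
`W₂ = ψ₁ψ₂' − ψ₂ψ₁'`. -/
theorem darboux2_eq_crum2 (u ψ₁ ψ₂ : ℝ → ℝ) (lam₁ lam₂ : ℝ)
    (hu : ContDiff ℝ (⊤ : ℕ∞) u) (h₁ : ContDiff ℝ (⊤ : ℕ∞) ψ₁) (h₂ : ContDiff ℝ (⊤ : ℕ∞) ψ₂)
    (hne₁ : ∀ x, ψ₁ x ≠ 0) (hne₂ : ∀ x, ψ₂ x ≠ 0)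
    (heq₁ : ∀ x, -deriv (deriv ψ₁) x + u x * ψ₁ x = lam₁ * ψ₁ x)
    (heq₂ : ∀ x, -deriv (deriv ψ₂) x + u x * ψ₂ x = lam₂ * ψ₂ x)
    (ψD12 W₂ uD1 uD2 uC2 : ℝ → ℝ)
    (hψD12 : ψD12 = fun x => deriv ψ₂ x - (deriv ψ₁ x / ψ₁ x) * ψ₂ x)
    (hψD12ne : ∀ x, ψD12 x ≠ 0)
    (hW₂ : W₂ = fun x => ψ₁ x * deriv ψ₂ x - ψ₂ x * deriv ψ₁ x)
    (hW₂ne : ∀ x, W₂ x ≠ 0)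
    (huD1 : uD1 = fun x => u x - 2 * deriv (fun y => deriv ψ₁ y / ψ₁ y) x)
    (huD2 : uD2 = fun x => uD1 x - 2 * deriv (fun y => deriv ψD12 y / ψD12 y) x)
    (huC2 : uC2 = fun x => u x - 2 * deriv (deriv (fun y => Real.log (W₂ y))) x) :
    uD2 = uC2 := by
  -- smoothness facts
  have h₁i : ContDiff ℝ ∞ ψ₁ := h₁.of_le (by simp)
  have h₂i : ContDiff ℝ ∞ ψ₂ := h₂.of_le (by simp)
  have h₁' : ContDiff ℝ ∞ (deriv ψ₁) := (contDiff_infty_iff_deriv.mp h₁i).2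
  have h₂' : ContDiff ℝ ∞ (deriv ψ₂) := (contDiff_infty_iff_deriv.mp h₂i).2
  have hW : ContDiff ℝ ∞ W₂ := by
    rw [hW₂]; exact (h₁i.mul h₂').sub (h₂i.mul h₁')
  have hW' : ContDiff ℝ ∞ (deriv W₂) := (contDiff_infty_iff_deriv.mp hW).2
  have hle : (∞ : WithTop ℕ∞) ≠ 0 := by simp
  -- ψD12 = W₂ / ψ₁
  have hDeq : ψD12 = fun x => W₂ x / ψ₁ x := by
    funext x
    rw [hψD12, hW₂]
    field_simp [hne₁ x]
  -- differentiability of the quotients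
  have hQ : Differentiable ℝ (fun x => deriv W₂ x / W₂ x) :=
    (hW'.differentiable hle).div (hW.differentiable hle) hW₂ne
  have hf : Differentiable ℝ (fun x => deriv ψ₁ x / ψ₁ x) :=
    (h₁'.differentiable hle).div (h₁i.differentiable hle) hne₁
  -- (ln W₂)' = W₂'/W₂
  have keylog : deriv (fun y => Real.log (W₂ y)) = fun y => deriv W₂ y / W₂ y := by
    funext y
    exact (((hW.differentiable hle) y).hasDerivAt.log (hW₂ne y)).deriv
  -- logarithmic derivative of ψD12
  have keyg : (fun y => deriv ψD12 y / ψD12 y)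
      = fun y => deriv W₂ y / W₂ y - deriv ψ₁ y / ψ₁ y := by
    funext y
    have hd : deriv ψD12 y
        = (deriv W₂ y * ψ₁ y - W₂ y * deriv ψ₁ y) / (ψ₁ y) ^ 2 := by
      rw [hDeq]
      exact (((hW.differentiable hle) y).hasDerivAt.div
        (((h₁i.differentiable hle) y).hasDerivAt) (hne₁ y)).deriv
    have hv : ψD12 y = W₂ y / ψ₁ y := by rw [hDeq]
    rw [hd, hv]
    field_simp [hne₁ y, hW₂ne y]
  funext x
  rw [huD2, huD1, huC2, keylog, keyg]
  have hsub : deriv (fun y => deriv W₂ y / W₂ y - deriv ψ₁ y / ψ₁ y) x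
      = deriv (fun y => deriv W₂ y / W₂ y) x - deriv (fun y => deriv ψ₁ y / ψ₁ y) x :=
    deriv_sub (hQ x) (hf x)
  simp only [hsub]
  ring
end

section
/- Suppose the Wronskians Wₙ, W_{n+1}, W_{n,n+1} of smooth eigenfunctions are nowhere vanishing and the induction hypotheses u^D[n] = u − 2(ln Wₙ)'' and ψ^D[n]ₛ = W_{n,s}/Wₙ hold (for all s > n). Then u^D[n+1] := u^D[n] − 2·(d/dx)((ψ^D[n]_{n+1})'/ψ^D[n]_{n+1}) equals u − 2·(d²/dx²) ln W_{n+1}, using that W_{n,n+1} = W_{n+1}. -/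
/-- Wronskian of the first `k` functions of a sequence (0-indexed: `ψ 0, …, ψ (k-1)`). -/
noncomputable def Wr (k : ℕ) (ψ : ℕ → ℝ → ℝ) : ℝ → ℝ :=
  fun x => (Matrix.of fun i j : Fin k => iteratedDeriv i (ψ j) x).det

/-- Wronskian of the first `k` functions of a sequence together with `ψ s`
(this is `W_{k,s}` for `s ≥ k`, 0-indexed). -/
noncomputable def Wrs (k s : ℕ) (ψ : ℕ → ℝ → ℝ) : ℝ → ℝ :=
  fun x => (Matrix.of fun i j : Fin (k + 1) =>
    iteratedDeriv i ((Fin.snoc (fun t : Fin k => ψ t) (ψ s) : Fin (k + 1) → ℝ → ℝ) j) x).det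

/-- Inductive step (for potentials) of the Darboux–Crum equivalence: if
`u^D[n] = u − 2(ln Wₙ)''` and `ψ^D[n]ₛ = W_{n,s}/Wₙ` for all `s ≥ n` (0-indexed),
then `u^D[n+1] := u^D[n] − 2((ψ^D[n]ₙ)'/ψ^D[n]ₙ)' = u − 2(ln W_{n+1})''`,
using `W_{n,n} = W_{n+1}` (0-indexed version of `W_{n,n+1} = W_{n+1}`). -/
theorem crum_inductive_step_potential (n : ℕ) (hn : 0 < n)
    (u : ℝ → ℝ) (ψ : ℕ → ℝ → ℝ) (lam : ℕ → ℝ)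
    (hu : ContDiff ℝ (⊤ : ℕ∞) u) (hψ : ∀ j, ContDiff ℝ (⊤ : ℕ∞) (ψ j))
    (hlam : Function.Injective lam)
    (heq : ∀ s x, -deriv (deriv (ψ s)) x + u x * ψ s x = lam s * ψ s x)
    (hWn : ∀ x, Wr n ψ x ≠ 0) (hWn1 : ∀ x, Wr (n + 1) ψ x ≠ 0)
    (hWnn1 : ∀ x, Wrs n n ψ x ≠ 0)
    (uDn : ℝ → ℝ) (ψDn : ℕ → ℝ → ℝ) (uDn1 : ℝ → ℝ)
    (huDn : uDn = fun x => u x - 2 * deriv (deriv (fun y => Real.log (Wr n ψ y))) x)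
    (hψDn : ∀ s, n ≤ s → ψDn s = fun x => Wrs n s ψ x / Wr n ψ x)
    (huDn1 : uDn1 = fun x =>
      uDn x - 2 * deriv (fun y => deriv (ψDn n) y / ψDn n y) x) :
    uDn1 = fun x => u x - 2 * deriv (deriv (fun y => Real.log (Wr (n + 1) ψ y))) x := by
  -- Wrs n n = Wr (n+1)
  have hWrs : Wrs n n ψ = Wr (n + 1) ψ := by
    funext x
    unfold Wrs Wr
    congr 1
    ext i j
    simp only [Matrix.of_apply]
    congr 1
    rcases lt_or_ge (j : ℕ) n with h | h
    · have hj : j = Fin.castSucc ⟨(j : ℕ), h⟩ := by ext; simp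
      rw [hj, Fin.snoc_castSucc]
      simp
    · have hj : j = Fin.last n := Fin.ext (le_antisymm (Nat.lt_succ_iff.mp j.isLt) h)
      rw [hj, Fin.snoc_last]
      simp
  -- smoothness of Wronskians
  have hWr : ∀ k : ℕ, ContDiff ℝ (⊤ : ℕ∞) (Wr k ψ) := by
    intro k
    have : Wr k ψ = fun x => ∑ σ : Equiv.Perm (Fin k),
        ((Equiv.Perm.sign σ : ℤ) : ℝ) *
          ∏ i : Fin k, iteratedDeriv ((σ i : Fin k) : ℕ) (ψ (i : ℕ)) x := by
      funext x
      unfold Wr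
      rw [Matrix.det_apply]
      simp [Units.smul_def, zsmul_eq_mul]
    rw [this]
    refine ContDiff.sum fun σ _ => contDiff_const.mul (contDiff_prod fun i _ => ?_)
    rw [iteratedDeriv_eq_iterate]
    exact ((hψ (i : ℕ)).of_le (by simp)).iterate_deriv _
  have hWnC := hWr n
  have hWn1C := hWr (n + 1)
  -- the transformed eigenfunction
  have hψn : ψDn n = fun x => Wr (n + 1) ψ x / Wr n ψ x := by
    rw [hψDn n le_rfl, hWrs]
  set f : ℝ → ℝ := fun x => Wr (n + 1) ψ x / Wr n ψ x with hf
  have hfC : ContDiff ℝ (⊤ : ℕ∞) f := hWn1C.div hWnC hWn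
  have hfne : ∀ x, f x ≠ 0 := fun x => div_ne_zero (hWn1 x) (hWn x)
  -- log of a smooth nonvanishing function: derivative is f'/f
  have hlogderiv : ∀ (g : ℝ → ℝ), ContDiff ℝ (⊤ : ℕ∞) g → (∀ x, g x ≠ 0) →
      deriv (fun y => Real.log (g y)) = fun y => deriv g y / g y := by
    intro g hg hgne
    funext y
    exact (((hg.differentiable (by simp)) y).hasDerivAt.log (hgne y)).deriv
  -- log f = log W_{n+1} - log W_n
  have hlogf : (fun y => Real.log (f y))
      = fun y => Real.log (Wr (n + 1) ψ y) - Real.log (Wr n ψ y) := by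
    funext y
    exact Real.log_div (hWn1 y) (hWn y)
  have hL1 : ContDiff ℝ (⊤ : ℕ∞) (fun y => Real.log (Wr (n + 1) ψ y)) :=
    hWn1C.log hWn1
  have hL0 : ContDiff ℝ (⊤ : ℕ∞) (fun y => Real.log (Wr n ψ y)) := hWnC.log hWn
  have hdL1 : Differentiable ℝ (deriv (fun y => Real.log (Wr (n + 1) ψ y))) :=
    ((contDiff_infty_iff_deriv.mp hL1).2).differentiable (by simp)
  have hdL0 : Differentiable ℝ (deriv (fun y => Real.log (Wr n ψ y))) :=
    ((contDiff_infty_iff_deriv.mp hL0).2).differentiable (by simp)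
  -- key pointwise identity for the extra term
  have hkey : ∀ x, deriv (fun y => deriv f y / f y) x
      = deriv (deriv (fun y => Real.log (Wr (n + 1) ψ y))) x
        - deriv (deriv (fun y => Real.log (Wr n ψ y))) x := by
    intro x
    have h1 : (fun y => deriv f y / f y) = deriv (fun y => Real.log (f y)) :=
      (hlogderiv f hfC hfne).symm
    rw [h1, hlogf]
    have h2 : deriv (fun y => Real.log (Wr (n + 1) ψ y) - Real.log (Wr n ψ y))
        = fun y => deriv (fun z => Real.log (Wr (n + 1) ψ z)) y
            - deriv (fun z => Real.log (Wr n ψ z)) y := by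
      funext y
      exact deriv_fun_sub ((hL1.differentiable (by simp)) y) ((hL0.differentiable (by simp)) y)
    rw [h2]
    exact deriv_fun_sub (hdL1 x) (hdL0 x)
  funext x
  rw [huDn1, huDn, hψn]
  have := hkey x
  simp only [hf] at this ⊢
  rw [this]
  ring
end

section
/- Under the hypotheses that ψ^D[n]_{n+1} = W_{n+1}/Wₙ and ψ^D[n]ₛ = W_{n,s}/Wₙ with Wₙ and W_{n+1} nowhere vanishing, the next iterated Darboux transform ψ^D[n+1]ₛ := (ψ^D[n]ₛ)' − ((ψ^D[n]_{n+1})'/ψ^D[n]_{n+1})·ψ^D[n]ₛ equals W_{n+1,s}/W_{n+1}, where W_{n+1,s} is the Wronskian of ψ₁,…,ψ_{n+1},ψₛ. -/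
open Matrix

namespace CrumAux

noncomputable def detCM (k : ℕ) : ContinuousMultilinearMap ℝ (fun _ : Fin k => (Fin k → ℝ)) ℝ :=
  MultilinearMap.mkContinuous
    (Matrix.detRowAlternating : (Fin k → ℝ) [⋀^Fin k]→ₗ[ℝ] ℝ).toMultilinearMap
    (Nat.factorial k) (by
      intro m
      show ‖Matrix.det (Matrix.of m)‖ ≤ _
      rw [Matrix.det_apply]
      refine (norm_sum_le _ _).trans ?_
      have hterm : ∀ σ : Equiv.Perm (Fin k),
          ‖Equiv.Perm.sign σ • ∏ i, (Matrix.of m) (σ i) i‖ ≤ ∏ i, ‖m i‖ := by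
        intro σ
        have h1 : ‖Equiv.Perm.sign σ • ∏ i, (Matrix.of m) (σ i) i‖
            = ‖∏ i, (Matrix.of m) (σ i) i‖ := by
          rcases Int.units_eq_one_or (Equiv.Perm.sign σ) with h | h <;>
            simp [h, Units.smul_def]
        rw [h1]
        have h2 : ‖∏ i, (Matrix.of m) (σ i) i‖ ≤ ∏ i, ‖m (σ i)‖ := by
          rw [norm_prod]
          refine Finset.prod_le_prod (fun i _ => norm_nonneg _) (fun i _ => ?_)
          exact norm_le_pi_norm (m (σ i)) i
        refine h2.trans_eq ?_
        exact Equiv.prod_comp σ (fun i => ‖m i‖)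
      refine (Finset.sum_le_sum fun σ _ => hterm σ).trans_eq ?_
      rw [Finset.sum_const, Finset.card_univ, Fintype.card_perm, Fintype.card_fin, nsmul_eq_mul])

theorem det_hasDerivAt {k : ℕ} (M : ℝ → Matrix (Fin k) (Fin k) ℝ)
    (M' : Matrix (Fin k) (Fin k) ℝ) (x : ℝ)
    (h : ∀ i j, HasDerivAt (fun t => M t i j) (M' i j) x) :
    HasDerivAt (fun t => (M t).det) (∑ i, ((M x).updateRow i (M' i)).det) x := by
  have hrow : ∀ i, HasFDerivAt (fun t => M t i)
      ((1 : ℝ →L[ℝ] ℝ).smulRight (M' i)) x := by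
    intro i
    have := hasDerivAt_pi.2 (fun j => h i j)
    exact this.hasFDerivAt
  have H := HasFDerivAt.multilinear_comp (detCM k) (g := fun i t => M t i)
      (g' := fun i => (1 : ℝ →L[ℝ] ℝ).smulRight (M' i)) (x := x) hrow
  have H2 := H.hasDerivAt
  convert H2 using 1
  · rfl
  · rfl
  · rfl
  · rw [ContinuousLinearMap.sum_apply]
    refine Finset.sum_congr rfl (fun i _ => ?_)
    show ((M x).updateRow i (M' i)).det = detCM k (Function.update (fun j => M x j) i
      (((1 : ℝ →L[ℝ] ℝ).smulRight (M' i)) 1))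
    simp only [ContinuousLinearMap.smulRight_apply, ContinuousLinearMap.one_apply, one_smul]
    show ((M x).updateRow i (M' i)).det = Matrix.det (Matrix.of (Function.update (fun j => M x j) i (M' i)))
    congr 1


theorem hasDerivAt_Wdet (m : ℕ) (g : Fin (m+1) → ℝ → ℝ) (hg : ∀ j, ContDiff ℝ (⊤ : ℕ∞) (g j)) (x : ℝ) :
    HasDerivAt (fun t => (Matrix.of fun i j : Fin (m+1) => iteratedDeriv i (g j) t).det)
      ((Matrix.of fun i j : Fin (m+1) =>
        iteratedDeriv (if i = Fin.last m then m+1 else i) (g j) x).det) x := by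
  have h : ∀ i j : Fin (m+1), HasDerivAt (fun t => iteratedDeriv (i:ℕ) (g j) t)
      (iteratedDeriv ((i:ℕ)+1) (g j) x) x := by
    intro i j
    have hd : DifferentiableAt ℝ (iteratedDeriv (i:ℕ) (g j)) x := by
      exact ((hg j).differentiable_iteratedDeriv (i:ℕ) (WithTop.coe_lt_coe.2 (ENat.natCast_lt_top _))).differentiableAt
    have := hd.hasDerivAt
    rwa [← iteratedDeriv_succ] at this
  have H := det_hasDerivAt (fun t => Matrix.of fun i j : Fin (m+1) => iteratedDeriv (i:ℕ) (g j) t)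
      (Matrix.of fun i j : Fin (m+1) => iteratedDeriv ((i:ℕ)+1) (g j) x) x (fun i j => h i j)
  convert H using 1
  rw [Finset.sum_eq_single_of_mem (Fin.last m) (Finset.mem_univ _)]
  · congr 1
    ext i j
    rcases eq_or_ne i (Fin.last m) with rfl | hne
    · simp [Matrix.updateRow_self]
    · simp [Matrix.updateRow_ne hne, hne]
  · intro i _ hne
    have hlt : (i : ℕ) < m := Fin.val_lt_last hne
    set i1 : Fin (m+1) := ⟨(i:ℕ)+1, by omega⟩ with hi1
    refine Matrix.det_zero_of_row_eq (i_ne_j := ?_) (M := _) (i := i) (j := i1) ?_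
    · intro hc
      have : (i:ℕ) = (i:ℕ)+1 := congrArg Fin.val hc
      omega
    · funext j
      have hii : i1 ≠ i := by
        intro hc
        have : (i:ℕ)+1 = (i:ℕ) := congrArg Fin.val hc
        omega
      simp [Matrix.updateRow_self, Matrix.updateRow_ne hii]
      rfl


theorem jacobi_mul (k : ℕ) (A : Matrix (Fin (k+2)) (Fin (k+2)) ℝ) :
    A.det * ((A.submatrix (Fin.castSucc (Fin.last k)).succAbove
          (Fin.castSucc (Fin.last k)).succAbove).det *
        (A.submatrix Fin.castSucc Fin.castSucc).det -
      (A.submatrix Fin.castSucc (Fin.castSucc (Fin.last k)).succAbove).det *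
        (A.submatrix (Fin.castSucc (Fin.last k)).succAbove Fin.castSucc).det) =
    A.det * ((A.submatrix (Fin.castAdd 2) (Fin.castAdd 2)).det * A.det) := by
  set p : Fin (k+2) := Fin.castSucc (Fin.last k) with hp
  set l : Fin (k+2) := Fin.last (k+1) with hl
  have hpv : (p : ℕ) = k := by simp [hp]
  have hlv : (l : ℕ) = k + 1 := by simp [hl]
  have hpl : p ≠ l := by
    intro h; rw [Fin.ext_iff, hpv, hlv] at h; omega
  set C : Matrix (Fin (k+2)) (Fin (k+2)) ℝ :=
    Matrix.updateCol (Matrix.updateCol 1 p (fun i => adjugate A i p)) l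
      (fun i => adjugate A i l) with hC
  have hCp : ∀ i, C i p = adjugate A i p := by
    intro i; simp [hC, Matrix.updateCol_apply, hpl]
  have hCl : ∀ i, C i l = adjugate A i l := by
    intro i; simp [hC, Matrix.updateCol_apply]
  have hCo : ∀ i j, j ≠ p → j ≠ l → C i j = if i = j then 1 else 0 := by
    intro i j h1 h2
    simp [hC, Matrix.updateCol_apply, h1, h2, Matrix.one_apply]
  have hinlp : ∀ j : Fin k, finSumFinEquiv (Sum.inl j) ≠ p := by
    intro j h
    rw [Fin.ext_iff] at h
    simp [hpv] at h
    omega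
  have hinll : ∀ j : Fin k, finSumFinEquiv (Sum.inl j) ≠ l := by
    intro j h
    rw [Fin.ext_iff] at h
    simp [hlv] at h
    omega
  have hinlp' : ∀ j : Fin k, Fin.castAdd 2 j ≠ p := by
    intro j h
    rw [Fin.ext_iff] at h
    have hj := j.isLt
    simp [hpv] at h
    omega
  have hinll' : ∀ j : Fin k, Fin.castAdd 2 j ≠ l := by
    intro j h
    rw [Fin.ext_iff] at h
    have hj := j.isLt
    simp [hlv] at h
    omega
  have hinr0 : finSumFinEquiv (Sum.inr (0 : Fin 2)) = p := by
    rw [Fin.ext_iff]; simp [hpv]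
  have hinr1 : finSumFinEquiv (Sum.inr (1 : Fin 2)) = l := by
    rw [Fin.ext_iff]; simp [hlv]
  -- determinant of C
  have hdetC : C.det = adjugate A p p * adjugate A l l - adjugate A p l * adjugate A l p := by
    rw [← Matrix.det_submatrix_equiv_self finSumFinEquiv C,
      ← Matrix.fromBlocks_toBlocks (C.submatrix finSumFinEquiv finSumFinEquiv)]
    have h11 : (C.submatrix finSumFinEquiv finSumFinEquiv).toBlocks₁₁ = 1 := by
      ext i j
      show C (finSumFinEquiv (Sum.inl i)) (finSumFinEquiv (Sum.inl j)) = _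
      rw [hCo _ _ (hinlp j) (hinll j)]
      simp [Matrix.one_apply, Equiv.apply_eq_iff_eq]
    have h21 : (C.submatrix finSumFinEquiv finSumFinEquiv).toBlocks₂₁ = 0 := by
      ext i j
      show C (finSumFinEquiv (Sum.inr i)) (finSumFinEquiv (Sum.inl j)) = _
      rw [hCo _ _ (hinlp j) (hinll j)]
      have hne' : Fin.natAdd k i ≠ Fin.castAdd 2 j := by
        intro h
        rw [Fin.ext_iff] at h
        have hj := j.isLt
        simp at h
        omega
      simp [hne']
    rw [h11, h21, Matrix.det_fromBlocks_zero₂₁, Matrix.det_one, one_mul, Matrix.det_fin_two]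
    have e00 : (C.submatrix finSumFinEquiv finSumFinEquiv).toBlocks₂₂ 0 0 = adjugate A p p := by
      show C (finSumFinEquiv (Sum.inr 0)) (finSumFinEquiv (Sum.inr 0)) = _
      rw [hinr0, hCp]
    have e01 : (C.submatrix finSumFinEquiv finSumFinEquiv).toBlocks₂₂ 0 1 = adjugate A p l := by
      show C (finSumFinEquiv (Sum.inr 0)) (finSumFinEquiv (Sum.inr 1)) = _
      rw [hinr0, hinr1, hCl]
    have e10 : (C.submatrix finSumFinEquiv finSumFinEquiv).toBlocks₂₂ 1 0 = adjugate A l p := by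
      show C (finSumFinEquiv (Sum.inr 1)) (finSumFinEquiv (Sum.inr 0)) = _
      rw [hinr0, hinr1, hCp]
    have e11 : (C.submatrix finSumFinEquiv finSumFinEquiv).toBlocks₂₂ 1 1 = adjugate A l l := by
      show C (finSumFinEquiv (Sum.inr 1)) (finSumFinEquiv (Sum.inr 1)) = _
      rw [hinr1, hCl]
    rw [e00, e01, e10, e11]
  -- entries of A * C
  have hACp : ∀ i, (A * C) i p = A.det * (if i = p then 1 else 0) := by
    intro i
    have h1 : (A * C) i p = (A * adjugate A) i p := by
      simp only [Matrix.mul_apply]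
      exact Finset.sum_congr rfl fun r _ => by rw [hCp]
    rw [h1, Matrix.mul_adjugate]
    simp [Matrix.one_apply]
  have hACl : ∀ i, (A * C) i l = A.det * (if i = l then 1 else 0) := by
    intro i
    have h1 : (A * C) i l = (A * adjugate A) i l := by
      simp only [Matrix.mul_apply]
      exact Finset.sum_congr rfl fun r _ => by rw [hCl]
    rw [h1, Matrix.mul_adjugate]
    simp [Matrix.one_apply]
  have hACo : ∀ i j, j ≠ p → j ≠ l → (A * C) i j = A i j := by
    intro i j h1 h2
    simp only [Matrix.mul_apply]
    rw [Finset.sum_congr rfl fun r _ => by rw [hCo r j h1 h2]]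
    simp
  -- determinant of A * C
  have hdetAC : (A * C).det =
      (A.submatrix (Fin.castAdd 2) (Fin.castAdd 2)).det * (A.det * A.det) := by
    rw [← Matrix.det_submatrix_equiv_self finSumFinEquiv (A * C),
      ← Matrix.fromBlocks_toBlocks ((A * C).submatrix finSumFinEquiv finSumFinEquiv)]
    have h11 : ((A * C).submatrix finSumFinEquiv finSumFinEquiv).toBlocks₁₁ =
        A.submatrix (Fin.castAdd 2) (Fin.castAdd 2) := by
      ext i j
      show (A * C) (finSumFinEquiv (Sum.inl i)) (finSumFinEquiv (Sum.inl j)) = _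
      rw [hACo _ _ (hinlp j) (hinll j)]
      rfl
    have h12 : ((A * C).submatrix finSumFinEquiv finSumFinEquiv).toBlocks₁₂ = 0 := by
      ext i j
      show (A * C) (finSumFinEquiv (Sum.inl i)) (finSumFinEquiv (Sum.inr j)) = _
      have hcol : finSumFinEquiv (Sum.inr j) = p ∨ finSumFinEquiv (Sum.inr j) = l := by
        match j with
        | 0 => exact Or.inl hinr0
        | 1 => exact Or.inr hinr1
      rcases hcol with h | h
      · rw [h, hACp]
        simp [hinlp' i]
      · rw [h, hACl]
        simp [hinll' i]
    rw [h11, h12, Matrix.det_fromBlocks_zero₁₂]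
    congr 1
    rw [Matrix.det_fin_two]
    have e00 : ((A * C).submatrix finSumFinEquiv finSumFinEquiv).toBlocks₂₂ 0 0 = A.det := by
      show (A * C) (finSumFinEquiv (Sum.inr 0)) (finSumFinEquiv (Sum.inr 0)) = _
      rw [hinr0, hACp]; simp
    have e01 : ((A * C).submatrix finSumFinEquiv finSumFinEquiv).toBlocks₂₂ 0 1 = 0 := by
      show (A * C) (finSumFinEquiv (Sum.inr 0)) (finSumFinEquiv (Sum.inr 1)) = _
      rw [hinr0, hinr1, hACl]; simp [hpl]
    have e10 : ((A * C).submatrix finSumFinEquiv finSumFinEquiv).toBlocks₂₂ 1 0 = 0 := by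
      show (A * C) (finSumFinEquiv (Sum.inr 1)) (finSumFinEquiv (Sum.inr 0)) = _
      rw [hinr0, hinr1, hACp]; simp [Ne.symm hpl]
    have e11 : ((A * C).submatrix finSumFinEquiv finSumFinEquiv).toBlocks₂₂ 1 1 = A.det := by
      show (A * C) (finSumFinEquiv (Sum.inr 1)) (finSumFinEquiv (Sum.inr 1)) = _
      rw [hinr1, hACl]; simp
    rw [e00, e01, e10, e11]
    ring
  -- adjugate entries as minors
  have hadj_pp : adjugate A p p = (A.submatrix p.succAbove p.succAbove).det := by
    rw [Matrix.adjugate_fin_succ_eq_det_submatrix]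
    rw [hpv]
    rw [Even.neg_one_pow ⟨k, by ring⟩, one_mul]
  have hadj_ll : adjugate A l l = (A.submatrix Fin.castSucc Fin.castSucc).det := by
    rw [Matrix.adjugate_fin_succ_eq_det_submatrix]
    rw [hlv, Fin.succAbove_last]
    rw [Even.neg_one_pow ⟨k + 1, by ring⟩, one_mul]
  have hadj_pl : adjugate A p l = -(A.submatrix Fin.castSucc p.succAbove).det := by
    rw [Matrix.adjugate_fin_succ_eq_det_submatrix]
    rw [hpv, hlv, Fin.succAbove_last]
    rw [Odd.neg_one_pow ⟨k, by ring⟩]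
    ring
  have hadj_lp : adjugate A l p = -(A.submatrix p.succAbove Fin.castSucc).det := by
    rw [Matrix.adjugate_fin_succ_eq_det_submatrix]
    rw [hpv, hlv, Fin.succAbove_last]
    rw [Odd.neg_one_pow ⟨k, by ring⟩]
    ring
  have key : A.det * C.det = (A.submatrix (Fin.castAdd 2) (Fin.castAdd 2)).det * (A.det * A.det) := by
    rw [← Matrix.det_mul, hdetAC]
  rw [hdetC, hadj_pp, hadj_ll, hadj_pl, hadj_lp] at key
  linear_combination key


theorem jacobi (k : ℕ) (A : Matrix (Fin (k+2)) (Fin (k+2)) ℝ) :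
    (A.submatrix (Fin.castSucc (Fin.last k)).succAbove
          (Fin.castSucc (Fin.last k)).succAbove).det *
        (A.submatrix Fin.castSucc Fin.castSucc).det -
      (A.submatrix Fin.castSucc (Fin.castSucc (Fin.last k)).succAbove).det *
        (A.submatrix (Fin.castSucc (Fin.last k)).succAbove Fin.castSucc).det =
    (A.submatrix (Fin.castAdd 2) (Fin.castAdd 2)).det * A.det := by
  set F : Matrix (Fin (k+2)) (Fin (k+2)) ℝ → ℝ := fun B =>
    (B.submatrix (Fin.castSucc (Fin.last k)).succAbove
          (Fin.castSucc (Fin.last k)).succAbove).det *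
        (B.submatrix Fin.castSucc Fin.castSucc).det -
      (B.submatrix Fin.castSucc (Fin.castSucc (Fin.last k)).succAbove).det *
        (B.submatrix (Fin.castSucc (Fin.last k)).succAbove Fin.castSucc).det with hF
  set G : Matrix (Fin (k+2)) (Fin (k+2)) ℝ → ℝ := fun B =>
    (B.submatrix (Fin.castAdd 2) (Fin.castAdd 2)).det * B.det with hG
  show F A = G A
  set M : ℝ → Matrix (Fin (k+2)) (Fin (k+2)) ℝ := fun t => A + t • 1 with hM
  have hMc : Continuous M := continuous_const.add (continuous_id.smul continuous_const)
  have hfc : Continuous (fun t => F (M t)) := by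
    apply Continuous.sub <;> apply Continuous.mul <;>
      exact (hMc.matrix_submatrix _ _).matrix_det
  have hgc : Continuous (fun t => G (M t)) :=
    ((hMc.matrix_submatrix _ _).matrix_det).mul hMc.matrix_det
  set q := Matrix.charpoly (-A) with hq
  have hq0 : q ≠ 0 := (Matrix.charpoly_monic _).ne_zero
  have hqev : ∀ t : ℝ, q.eval t = (M t).det := by
    intro t
    rw [hq, Matrix.charpoly]
    rw [show (Polynomial.eval t (Matrix.charmatrix (-A)).det)
        = ((Matrix.charmatrix (-A)).map (Polynomial.evalRingHom t)).det from
      (RingHom.map_det (Polynomial.evalRingHom t) _)]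
    congr 1
    ext i j
    show ((Matrix.charmatrix (-A)).map (Polynomial.evalRingHom t)) i j = (A + t • 1) i j
    rw [Matrix.map_apply, Matrix.add_apply, Matrix.smul_apply]
    by_cases hij : i = j
    · subst hij
      rw [Matrix.one_apply_eq, Matrix.charmatrix_apply_eq]
      simp [Matrix.neg_apply]
      ring
    · rw [Matrix.one_apply_ne hij, Matrix.charmatrix_apply_ne _ _ _ hij]
      simp [Matrix.neg_apply]
  have hdense : Dense {t : ℝ | q.IsRoot t}ᶜ :=
    Set.Countable.dense_compl (𝕜 := ℝ) (Polynomial.finite_setOf_isRoot hq0).countable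
  have heq : Set.EqOn (fun t => F (M t)) (fun t => G (M t)) {t : ℝ | q.IsRoot t}ᶜ := by
    intro t ht
    have hdet : (M t).det ≠ 0 := by
      rw [← hqev t]
      exact ht
    have hj := jacobi_mul k (M t)
    exact mul_left_cancel₀ hdet hj
  have hfg := Continuous.ext_on hdense hfc hgc heq
  have h0 := congrFun hfg 0
  simpa [hM] using h0

end CrumAux

/-- Inductive step (for eigenfunctions) of the Darboux–Crum equivalence:
if `ψ^D[n]ₙ = W_{n+1}/Wₙ` and `ψ^D[n]ₛ = W_{n,s}/Wₙ` with `Wₙ`, `W_{n+1}` nowhere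
vanishing, then `ψ^D[n+1]ₛ := (ψ^D[n]ₛ)' − ((ψ^D[n]ₙ)'/ψ^D[n]ₙ)·ψ^D[n]ₛ`
equals `W_{n+1,s}/W_{n+1}` (0-indexed, so paper's `s > n` is `s > n` here). -/
theorem crum_inductive_step_eigenfunction (n : ℕ) (hn : 0 < n)
    (ψ : ℕ → ℝ → ℝ) (hψ : ∀ j, ContDiff ℝ (⊤ : ℕ∞) (ψ j))
    (hWn : ∀ x, Wr n ψ x ≠ 0) (hWn1 : ∀ x, Wr (n + 1) ψ x ≠ 0)
    (ψDn ψDn1 : ℕ → ℝ → ℝ)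
    (hψDnn : ψDn n = fun x => Wr (n + 1) ψ x / Wr n ψ x)
    (hψDn : ∀ s, n ≤ s → ψDn s = fun x => Wrs n s ψ x / Wr n ψ x)
    (hψDn1 : ∀ s, n < s → ψDn1 s = fun x =>
      deriv (ψDn s) x - (deriv (ψDn n) x / ψDn n x) * ψDn s x) :
    ∀ s, n < s → ψDn1 s = fun x => Wrs (n + 1) s ψ x / Wr (n + 1) ψ x := by
  intro s hs
  rw [hψDn1 s hs]
  funext x
  beta_reduce
  set p : Fin (n+2) := Fin.castSucc (Fin.last n) with hp
  set G : Fin (n+2) → ℝ → ℝ :=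
    (Fin.snoc (fun t : Fin (n+1) => ψ t) (ψ s) : Fin (n+2) → ℝ → ℝ) with hG
  set A : Matrix (Fin (n+2)) (Fin (n+2)) ℝ :=
    Matrix.of (fun i j : Fin (n+2) => iteratedDeriv i (G j) x) with hA
  set Gn : Fin (n+1) → ℝ → ℝ :=
    (Fin.snoc (fun t : Fin n => ψ t) (ψ s) : Fin (n+1) → ℝ → ℝ) with hGn
  -- basic facts about G and succAbove
  have hGs : ∀ j : Fin (n+1), G (Fin.castSucc j) = ψ j := by
    intro j
    rw [hG]
    exact Fin.snoc_castSucc _ _ j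
  have hGl : G (Fin.last (n+1)) = ψ s := by
    rw [hG]; exact Fin.snoc_last _ _
  have hpsa : ∀ i : Fin (n+1), p.succAbove i =
      if i = Fin.last n then Fin.last (n+1) else Fin.castSucc i := by
    intro i
    rcases eq_or_ne i (Fin.last n) with rfl | hne
    · rw [if_pos rfl]
      have h1 : ¬ (Fin.castSucc (Fin.last n) < p) := lt_irrefl _
      rw [Fin.succAbove, if_neg h1, Fin.succ_last]
    · rw [if_neg hne]
      have hlt : Fin.castSucc i < p := by
        rw [Fin.lt_def]
        simpa [hp] using Fin.val_lt_last hne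
      rw [Fin.succAbove, if_pos hlt]
  have hpsa_val : ∀ i : Fin (n+1), ((p.succAbove i : Fin (n+2)) : ℕ)
      = if i = Fin.last n then n+1 else (i : ℕ) := by
    intro i
    rw [hpsa i]
    rcases eq_or_ne i (Fin.last n) with rfl | hne
    · simp
    · simp [hne]
  have hGp : ∀ j : Fin (n+1), G (p.succAbove j) = Gn j := by
    intro j
    induction j using Fin.lastCases with
    | last =>
      rw [hpsa, if_pos rfl, hGl, hGn, Fin.snoc_last]
    | cast j' =>
      have hne : Fin.castSucc j' ≠ Fin.last n := Fin.ne_last_of_lt (Fin.castSucc_lt_last j')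
      rw [hpsa, if_neg hne, hGs, hGn, Fin.snoc_castSucc]
      simp
  have hGc : ∀ j : Fin n, G (Fin.castAdd 2 j) = ψ j := by
    intro j
    have h1 : Fin.castAdd 2 j = Fin.castSucc (Fin.castSucc j) := by
      rw [Fin.ext_iff]; simp
    rw [h1, hGs]
    simp
  have hGsm : ∀ j : Fin (n+2), ContDiff ℝ (⊤ : ℕ∞) (G j) := by
    intro j
    induction j using Fin.lastCases with
    | last => rw [hGl]; exact hψ s
    | cast j' => rw [hGs]; exact hψ _
  have hGnsm : ∀ j : Fin (n+1), ContDiff ℝ (⊤ : ℕ∞) (Gn j) := by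
    intro j
    induction j using Fin.lastCases with
    | last => rw [hGn, Fin.snoc_last]; exact hψ s
    | cast j' => rw [hGn, Fin.snoc_castSucc]; exact hψ _
  -- the four static minors
  have E1 : Wrs (n+1) s ψ x = A.det := rfl
  have E2 : Wr (n+1) ψ x = (A.submatrix Fin.castSucc Fin.castSucc).det := by
    unfold Wr
    congr 1
    ext i j
    rw [Matrix.submatrix_apply, hA]
    simp [hGs]
  have E3 : Wr n ψ x = (A.submatrix (Fin.castAdd 2) (Fin.castAdd 2)).det := by
    unfold Wr
    congr 1
    ext i j
    rw [Matrix.submatrix_apply, hA]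
    simp [hGc]
  have E4 : Wrs n s ψ x = (A.submatrix Fin.castSucc p.succAbove).det := by
    unfold Wrs
    congr 1
    ext i j
    rw [Matrix.submatrix_apply, hA]
    simp [hGp, hGn]
  -- derivatives
  have D1 : HasDerivAt (fun t => Wr (n+1) ψ t)
      ((A.submatrix p.succAbove Fin.castSucc).det) x := by
    have H := CrumAux.hasDerivAt_Wdet n (fun j : Fin (n+1) => ψ j) (fun j => hψ _) x
    convert H using 1
    · rfl
    congr 1
    ext i j
    rw [Matrix.submatrix_apply, hA]
    simp only [Matrix.of_apply, hpsa_val i, hGs]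
  have D2 : HasDerivAt (fun t => Wrs n s ψ t)
      ((A.submatrix p.succAbove p.succAbove).det) x := by
    have H := CrumAux.hasDerivAt_Wdet n Gn hGnsm x
    convert H using 1
    · rfl
    congr 1
    ext i j
    rw [Matrix.submatrix_apply, hA]
    simp only [Matrix.of_apply, hpsa_val i, hGp]
  obtain ⟨m, rfl⟩ : ∃ m, n = m + 1 := ⟨n - 1, by omega⟩
  have D3 : HasDerivAt (fun t => Wr (m+1) ψ t)
      ((Matrix.of fun i j : Fin (m+1) =>
        iteratedDeriv (if i = Fin.last m then m+1 else i) (ψ j) x).det) x :=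
    CrumAux.hasDerivAt_Wdet m (fun j : Fin (m+1) => ψ j) (fun j => hψ _) x
  -- abbreviations
  have hax : Wr (m+1) ψ x ≠ 0 := hWn x
  have hbx : Wr (m+1+1) ψ x ≠ 0 := hWn1 x
  -- compute the two derivs appearing in the goal
  have hderiv_n : deriv (ψDn (m+1)) x
      = ((A.submatrix p.succAbove Fin.castSucc).det * Wr (m+1) ψ x
        - Wr (m+1+1) ψ x * (Matrix.of fun i j : Fin (m+1) =>
          iteratedDeriv (if i = Fin.last m then m+1 else i) (ψ j) x).det) / Wr (m+1) ψ x ^ 2 := by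
    rw [hψDnn]
    exact (D1.div D3 hax).deriv
  have hderiv_s : deriv (ψDn s) x
      = ((A.submatrix p.succAbove p.succAbove).det * Wr (m+1) ψ x
        - Wrs (m+1) s ψ x * (Matrix.of fun i j : Fin (m+1) =>
          iteratedDeriv (if i = Fin.last m then m+1 else i) (ψ j) x).det) / Wr (m+1) ψ x ^ 2 := by
    rw [hψDn s hs.le]
    exact (D2.div D3 hax).deriv
  have hval_n : ψDn (m+1) x = Wr (m+1+1) ψ x / Wr (m+1) ψ x := by rw [hψDnn]
  have hval_s : ψDn s x = Wrs (m+1) s ψ x / Wr (m+1) ψ x := by rw [hψDn s hs.le]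
  have jac := CrumAux.jacobi (m+1) A
  rw [hderiv_n, hderiv_s, hval_n, hval_s]
  rw [← E2, ← E3, ← E4] at jac
  rw [E1]
  set a := Wr (m+1) ψ x
  set b := Wr (m+1+1) ψ x
  set c := Wrs (m+1) s ψ x
  set a' := (Matrix.of fun i j : Fin (m+1) =>
    iteratedDeriv (if i = Fin.last m then m+1 else i) (ψ j) x).det
  set b' := (A.submatrix p.succAbove Fin.castSucc).det
  set c' := (A.submatrix p.succAbove p.succAbove).det
  have h1 : (c' * a - c * a') / a ^ 2 - ((b' * a - b * a') / a ^ 2) / (b / a) * (c / a)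
      = (c' * b - c * b') / (a * b) := by
    field_simp
    ring
  rw [h1]
  rw [show c' * b - c * b' = a * A.det from jac, mul_div_mul_left A.det b hax]
end

section
/- Assume the shape invariance condition u[1](x;a) = u(x;a₁) + R(a₁) holds for all parameter values a (with a₁ = f(a)), and assume ψ[1]₂(x;a) = ψ₁(x;a₁) up to a multiplicative constant (shape invariance of the first excited wave function). Then the second-order Darboux transform satisfies u[2](x;a) = u[1](x;a₁) + R(a₁), i.e., u[1] and u[2] are pairwise shape invariant. -/
/-- If `u` and `u[1]` are pairwise shape invariant and the transformed wave
function satisfies `ψ[1]₂(·;a) = c·ψ₁(·;a₁)` (shape invariance up to a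
multiplicative constant), then `u[1]` and `u[2]` are also pairwise shape
invariant: `u[2](x;a) = u[1](x;a₁) + R(a₁)`. -/
theorem shape_invariance_second_darboux {α : Type*} (u : α → ℝ → ℝ) (f : α → α)
    (R : α → ℝ) (ψ₁ : α → ℝ → ℝ) (ψ12 : α → ℝ → ℝ) (c : α → ℝ)
    (hu : ∀ a, ContDiff ℝ (⊤ : ℕ∞) (u a)) (hψ₁ : ∀ a, ContDiff ℝ (⊤ : ℕ∞) (ψ₁ a))
    (hψ₁ne : ∀ a x, ψ₁ a x ≠ 0) (hc : ∀ a, c a ≠ 0)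
    (u1 u2 : α → ℝ → ℝ)
    (hu1 : ∀ a, u1 a = fun x =>
      u a x - 2 * deriv (fun y => deriv (ψ₁ a) y / ψ₁ a y) x)
    (hSI : ∀ a x, u1 a x = u (f a) x + R (f a))
    (hψ12 : ∀ a, ψ12 a = fun x => c a * ψ₁ (f a) x)
    (hu2 : ∀ a, u2 a = fun x =>
      u1 a x - 2 * deriv (fun y => deriv (ψ12 a) y / ψ12 a y) x) :
    ∀ a x, u2 a x = u1 (f a) x + R (f a) := by
  intro a x
  have hkey : (fun y => deriv (ψ12 a) y / ψ12 a y)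
      = fun y => deriv (ψ₁ (f a)) y / ψ₁ (f a) y := by
    funext y
    rw [hψ12 a]
    have hd : deriv (fun x => c a * ψ₁ (f a) x) y = c a * deriv (ψ₁ (f a)) y :=
      deriv_const_mul _ ((hψ₁ (f a)).differentiable (by simp) y)
    rw [hd, mul_div_mul_left _ _ (hc a)]
  rw [hu2 a]
  simp only [hkey]
  rw [hSI a x, hu1 (f a)]
  ring
end

section
/- Assume the inductive shape invariance hypothesis u[k](x;a) = u[k−1](x;a₁) + R(a₁) for all a (with a₁ = f(a)), the eigenvalue relation λₛ(a₁) + R(a₁) = λ_{s+1}(a), and that ψ[k+1]_{s+1}(x;a) = ψ[k]ₛ(x;a₁) up to a multiplicative constant for s = k+1. Then u[k+2](x;a) = u[k+1](x;a₁) + R(a₁). -/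
/-- Inductive step of the extended shape invariance theorem: if the neighbouring
iterated Darboux potentials satisfy `u[k+1](x;a) = u[k](x;a₁) + R(a₁)`, the
eigenvalues satisfy `λₛ(a₁) + R(a₁) = λ_{s+1}(a)`, and the transformed wave
functions satisfy `ψ[k+1]_{s+1}(x;a) = c·ψ[k]ₛ(x;a₁)` for `s = k+1`, then
`u[k+2](x;a) = u[k+1](x;a₁) + R(a₁)`.  Here `uSeq j = u[j]` and
`ψD j s = ψ[j]ₛ` are the iterated Darboux transforms, with
`u[j+1] = u[j] − 2((ψ[j]_{j+1})'/ψ[j]_{j+1})'`. -/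
theorem shape_invariance_inductive_step {α : Type*} (k : ℕ)
    (f : α → α) (R : α → ℝ) (lam : ℕ → α → ℝ)
    (uSeq : ℕ → α → ℝ → ℝ) (ψD : ℕ → ℕ → α → ℝ → ℝ) (c : α → ℝ)
    (hsmooth : ∀ j s a, ContDiff ℝ (⊤ : ℕ∞) (ψD j s a))
    (hne : ∀ j s a x, ψD j s a x ≠ 0) (hc : ∀ a, c a ≠ 0)
    (hdef : ∀ j a, uSeq (j + 1) a = fun x =>
      uSeq j a x - 2 * deriv (fun y => deriv (ψD j (j + 1) a) y / ψD j (j + 1) a y) x)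
    (hSI : ∀ a x, uSeq (k + 1) a x = uSeq k (f a) x + R (f a))
    (heig : ∀ s a, lam s (f a) + R (f a) = lam (s + 1) a)
    (hwave : ∀ a, ψD (k + 1) (k + 2) a = fun x => c a * ψD k (k + 1) (f a) x) :
    ∀ a x, uSeq (k + 2) a x = uSeq (k + 1) (f a) x + R (f a) := by
  intro a x
  have key : (fun y => deriv (ψD (k + 1) (k + 2) a) y / ψD (k + 1) (k + 2) a y)
      = fun y => deriv (ψD k (k + 1) (f a)) y / ψD k (k + 1) (f a) y := by
    funext y
    rw [hwave a]
    have hdiff : DifferentiableAt ℝ (ψD k (k + 1) (f a)) y :=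
      ((hsmooth k (k + 1) (f a)).differentiable (by simp)) y
    rw [deriv_const_mul _ hdiff]
    simp only
    rw [mul_div_mul_left _ _ (hc a)]
  have h2 := hdef (k + 1) a
  have h1 := hdef k (f a)
  calc uSeq (k + 2) a x
      = uSeq (k + 1) a x - 2 * deriv
        (fun y => deriv (ψD (k + 1) (k + 2) a) y / ψD (k + 1) (k + 2) a y) x := by
        rw [h2]
    _ = uSeq k (f a) x + R (f a) - 2 * deriv
        (fun y => deriv (ψD k (k + 1) (f a)) y / ψD k (k + 1) (f a) y) x := by
        rw [hSI a x, key]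
    _ = uSeq (k + 1) (f a) x + R (f a) := by rw [h1]; ring
end

section
/- Let ψ₀, ψ₁ be smooth nowhere-vanishing solutions of −ψᵢ'' + V·ψᵢ = εᵢψᵢ with hᵢ = ψᵢ'/ψᵢ and h₁ − h₀ nowhere zero. Then the second iterated Darboux transformed potential V^D[2] = V^D[1] − 2·(d/dx)((ψ^D[1]₂)'/ψ^D[1]₂), with V^D[1] = V − 2(ln ψ₀)'' and ψ^D[1]₂ = (h₁ − h₀)ψ₁, equals V − 2·(d²/dx²) ln W₂, where W₂ = (h₁ − h₀)·ψ₀·ψ₁ is the Wronskian of ψ₀ and ψ₁. Hence V^D[2] = V^C[2]. -/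
/-- General proof that the second Darboux iteration equals the second Crum
transform: with `h᎐ᵢ = ψᵢ'/ψᵢ`, `V^D[1] = V − 2(ln ψ₀)''`,
`ψ^D[1]₂ = (h₁ − h₀)ψ₁` and `W₂ = (h₁ − h₀)ψ₀ψ₁`,
`V^D[2] = V^D[1] − 2((ψ^D[1]₂)'/ψ^D[1]₂)' = V − 2(ln W₂)'' = V^C[2]`. -/
theorem darboux2_eq_crum2_general (V ψ₀ ψ₁ : ℝ → ℝ) (ε₀ ε₁ : ℝ)
    (hV : ContDiff ℝ (⊤ : ℕ∞) V)
    (h0 : ContDiff ℝ (⊤ : ℕ∞) ψ₀) (h1 : ContDiff ℝ (⊤ : ℕ∞) ψ₁)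
    (hne₀ : ∀ x, ψ₀ x ≠ 0) (hne₁ : ∀ x, ψ₁ x ≠ 0)
    (heq₀ : ∀ x, -deriv (deriv ψ₀) x + V x * ψ₀ x = ε₀ * ψ₀ x)
    (heq₁ : ∀ x, -deriv (deriv ψ₁) x + V x * ψ₁ x = ε₁ * ψ₁ x)
    (h₀ h₁ ψD12 VD1 VD2 W₂ VC2 : ℝ → ℝ)
    (hh₀ : h₀ = fun x => deriv ψ₀ x / ψ₀ x)
    (hh₁ : h₁ = fun x => deriv ψ₁ x / ψ₁ x)
    (hdiff : ∀ x, h₁ x - h₀ x ≠ 0)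
    (hVD1 : VD1 = fun x => V x - 2 * deriv (deriv (fun y => Real.log (ψ₀ y))) x)
    (hψD12 : ψD12 = fun x => (h₁ x - h₀ x) * ψ₁ x)
    (hVD2 : VD2 = fun x => VD1 x - 2 * deriv (fun y => deriv ψD12 y / ψD12 y) x)
    (hW₂ : W₂ = fun x => (h₁ x - h₀ x) * ψ₀ x * ψ₁ x)
    (hVC2 : VC2 = fun x => V x - 2 * deriv (deriv (fun y => Real.log (W₂ y))) x) :
    VD2 = VC2 := by
  -- smoothness of derivatives
  have hd0' : ContDiff ℝ (⊤ : ℕ∞) (deriv ψ₀) :=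
    (h0.fderiv_right (m := (⊤ : ℕ∞)) (by simp)).clm_apply (contDiff_const (c := (1:ℝ)))
  have hd1' : ContDiff ℝ (⊤ : ℕ∞) (deriv ψ₁) :=
    (h1.fderiv_right (m := (⊤ : ℕ∞)) (by simp)).clm_apply (contDiff_const (c := (1:ℝ)))
  have hD0 : Differentiable ℝ ψ₀ := h0.differentiable (by simp)
  have hD1 : Differentiable ℝ ψ₁ := h1.differentiable (by simp)
  -- h₀, h₁ smooth
  have hch₀ : ContDiff ℝ (⊤ : ℕ∞) h₀ := by rw [hh₀]; exact hd0'.div h0 hne₀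
  have hch₁ : ContDiff ℝ (⊤ : ℕ∞) h₁ := by rw [hh₁]; exact hd1'.div h1 hne₁
  -- ψD12 smooth and nowhere zero
  have hcψD : ContDiff ℝ (⊤ : ℕ∞) ψD12 := by
    rw [hψD12]; exact ((hch₁.sub hch₀).mul h1)
  have hneD : ∀ x, ψD12 x ≠ 0 := by
    intro x; rw [hψD12]; exact mul_ne_zero (hdiff x) (hne₁ x)
  have hDψD : Differentiable ℝ ψD12 := hcψD.differentiable (by simp)
  have hdD' : ContDiff ℝ (⊤ : ℕ∞) (deriv ψD12) :=
    (hcψD.fderiv_right (m := (⊤ : ℕ∞)) (by simp)).clm_apply (contDiff_const (c := (1:ℝ)))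
  -- g0 = ψ₀'/ψ₀, g = ψD12'/ψD12
  set g0 : ℝ → ℝ := fun x => deriv ψ₀ x / ψ₀ x with hg0
  set g : ℝ → ℝ := fun x => deriv ψD12 x / ψD12 x with hg
  have hcg0 : ContDiff ℝ (⊤ : ℕ∞) g0 := hd0'.div h0 hne₀
  have hcg : ContDiff ℝ (⊤ : ℕ∞) g := hdD'.div hcψD hneD
  have hDg0 : Differentiable ℝ g0 := hcg0.differentiable (by simp)
  have hDg : Differentiable ℝ g := hcg.differentiable (by simp)
  -- deriv of log ψ₀
  have hlog0 : deriv (fun y => Real.log (ψ₀ y)) = g0 := by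
    funext y
    exact ((hD0 y).hasDerivAt.log (hne₀ y)).deriv
  -- W₂ = ψ₀ * ψD12
  have hW2' : W₂ = fun x => ψ₀ x * ψD12 x := by
    funext x; rw [hW₂, hψD12]; ring
  have hDW : Differentiable ℝ W₂ := by
    rw [hW2']; exact hD0.mul hDψD
  have hneW : ∀ x, W₂ x ≠ 0 := by
    intro x; rw [hW2']; exact mul_ne_zero (hne₀ x) (hneD x)
  -- deriv of log W₂ = g0 + g
  have hlogW : deriv (fun y => Real.log (W₂ y)) = fun y => g0 y + g y := by
    funext y
    have h1' := ((hDW y).hasDerivAt.log (hneW y)).deriv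
    rw [h1']
    have hdW : deriv W₂ y = deriv ψ₀ y * ψD12 y + ψ₀ y * deriv ψD12 y := by
      conv_lhs => rw [hW2']
      exact deriv_mul (hD0 y) (hDψD y)
    rw [hdW]
    show _ = deriv ψ₀ y / ψ₀ y + deriv ψD12 y / ψD12 y
    rw [hW2']
    field_simp [hne₀ y, hneD y]
  funext x
  rw [hVD2, hVD1, hVC2, hlog0, hlogW]
  have h' : deriv (fun y => g0 y + g y) x = deriv g0 x + deriv g x :=
    deriv_add (hDg0 x) (hDg x)
  simp only [h']
  ring
end
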